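/- arXiv:1601.06312 — 4 statements merged into one kernel-verified Lean document; each statement's English description precedes it below -/
import Mathlib

section
/- Let R be an input-preserving channel (i.e., (x,x) ∈ R whenever x is in the domain of R), let C be an R-detecting set of words, and let w ∉ C. Then C ∪ {w} is R-detecting if and only if w ∉ (R ∪ R⁻¹)(C), where (R ∪ R⁻¹)(C) = {y : ∃u ∈ C, (u,y) ∈ R or (y,u) ∈ R}. -/
def Detecting {α : Type*} (R : List α → List α → Prop) (C : Set (List α)) : Prop :=
  ∀ u ∈ C, ∀ v ∈ C, R u v → u = v

theorem detecting_union_singleton_iff {α : Type*} {R : List α → List α → Prop}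
    {C : Set (List α)} {w : List α} :
    Detecting R (C ∪ {w}) ↔
      Detecting R C ∧ ∀ u ∈ C, (R u w → u = w) ∧ (R w u → w = u) := by
  constructor
  · intro h
    exact ⟨fun u hu v hv => h u (.inl hu) v (.inl hv),
      fun u hu => ⟨h u (.inl hu) w (.inr rfl), h w (.inr rfl) u (.inl hu)⟩⟩
  · rintro ⟨hC, hw⟩ u (hu | rfl) v (hv | rfl)
    · exact hC u hu v hv
    · exact (hw u hu).1
    · exact (hw v hv).2
    · exact fun _ => rfl

theorem addWord_iff_general {α : Type*} (R : List α → List α → Prop) (C : Set (List α))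
    (hC : Detecting R C) (w : List α) (hw : w ∉ C) :
    Detecting R (C ∪ {w}) ↔ w ∉ {y : List α | ∃ u ∈ C, R u y ∨ R y u} := by
  have hne : ∀ u ∈ C, u ≠ w := fun u hu huw => hw (huw ▸ hu)
  rw [detecting_union_singleton_iff, and_iff_right hC]
  simp only [Set.mem_ofPred_eq, not_exists, not_and, not_or]
  exact forall₂_congr fun u hu => by simp [hne u hu, (hne u hu).symm]

/-- For an input-preserving channel `R` and `R`-detecting code `C`, a word `w ∉ C`
can be added into `C` iff `w ∉ (R ∪ R⁻¹)(C)`. -/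
theorem addWord_iff {α : Type*} (R : List α → List α → Prop) (C : Set (List α))
    (hIP : ∀ x : List α, (∃ y, R x y) → R x x)
    (hC : Detecting R C) (w : List α) (hw : w ∉ C) :
    Detecting R (C ∪ {w}) ↔ w ∉ {y : List α | ∃ u ∈ C, R u y ∨ R y u} :=
  addWord_iff_general R C hC w hw
end

section
/- Let R be an input-preserving channel and let C ⊆ Σ^ℓ be an R-detecting block code. Then C is maximal R-detecting (no word of Σ^ℓ outside C can be added while preserving R-detection) if and only if Σ^ℓ \ (R ∪ R⁻¹)(C) = ∅. -/
theorem detecting_insert_iff {α : Type*} {R : List α → List α → Prop} {C : Set (List α)}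
    {w : List α} (hw : w ∉ C) :
    Detecting R (insert w C) ↔ Detecting R C ∧ ∀ u ∈ C, ¬ R u w ∧ ¬ R w u := by
  constructor
  · intro h
    refine ⟨fun u hu v hv huv ↦ h u (.inr hu) v (.inr hv) huv, fun u hu ↦ ⟨?_, ?_⟩⟩
    · exact fun huw ↦ hw (h u (.inr hu) w (.inl rfl) huw ▸ hu)
    · exact fun hwu ↦ hw (h w (.inl rfl) u (.inr hu) hwu ▸ hu)
  · rintro ⟨hC, hsep⟩ u (rfl | hu) v (rfl | hv) huv
    · rfl
    · exact absurd huv (hsep v hv).2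
    · exact absurd huv (hsep u hu).1
    · exact hC u hu v hv huv

theorem not_detecting_insert_iff {α : Type*} {R : List α → List α → Prop} {C : Set (List α)}
    {w : List α} (hdet : Detecting R C) (hw : w ∉ C) :
    ¬ Detecting R (insert w C) ↔ ∃ u ∈ C, R u w ∨ R w u := by
  simp only [detecting_insert_iff hw, hdet, true_and, not_forall, not_and_or, not_not,
    exists_prop]

theorem maximal_iff_diff_empty_general {α : Type*} (R : List α → List α → Prop)
    (ℓ : ℕ) (C : Set (List α))
    (hIP : ∀ x : List α, R x x)
    (hdet : Detecting R C) :
    (∀ w : List α, w.length = ℓ → w ∉ C → ¬ Detecting R (C ∪ {w}))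
    ↔ {w : List α | w.length = ℓ} \ {y : List α | ∃ u ∈ C, R u y ∨ R y u} = ∅ := by
  simp only [Set.sdiff_eq_empty, Set.union_singleton]
  constructor
  · intro hmax w hw
    by_cases hwC : w ∈ C
    · exact ⟨w, hwC, .inl (hIP w)⟩
    · exact (not_detecting_insert_iff hdet hwC).1 (hmax w hw hwC)
  · intro hcover w hw hwC
    exact (not_detecting_insert_iff hdet hwC).2 (hcover hw)

/-- For an input-preserving channel `R` and an `R`-detecting block code `C ⊆ Σ^ℓ`,
`C` is maximal `R`-detecting iff `Σ^ℓ \ (R ∪ R⁻¹)(C) = ∅`. -/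
theorem maximal_iff_diff_empty {α : Type*} (R : List α → List α → Prop)
    (ℓ : ℕ) (C : Set (List α))
    (hIP : ∀ x : List α, R x x)
    (hC : C ⊆ {w : List α | w.length = ℓ}) (hdet : Detecting R C) :
    (∀ w : List α, w.length = ℓ → w ∉ C → ¬ Detecting R (C ∪ {w}))
    ↔ {w : List α | w.length = ℓ} \ {y : List α | ∃ u ∈ C, R u y ∨ R y u} = ∅ :=
  maximal_iff_diff_empty_general R ℓ C hIP hdet
end

section
/- Let Σ be a finite nonempty alphabet, R an input-preserving channel, and C ⊆ Σ^ℓ an R-detecting block code. Define the maximality index μ(C) = |Σ^ℓ ∩ (R ∪ R⁻¹)(C)| / |Σ^ℓ|. Then μ(C) = 1 if and only if C is maximal R-detecting. -/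
/-! A word `w` is counted by the maximality index exactly when it is in `C` (by input
preservation) or can be confused with a codeword, and for `w ∉ C` the latter says precisely
that `C ∪ {w}` is no longer detecting. So the index is `1` iff every word outside `C` spoils
detection. -/

theorem Set.ncard_div_ncard_eq_one_iff {β : Type*} {S T : Set β} (hS : S.Finite)
    (hS₀ : S.Nonempty) (hTS : T ⊆ S) : (T.ncard : ℝ) / S.ncard = 1 ↔ T = S := by
  have hpos : (0 : ℝ) < S.ncard := by exact_mod_cast (Set.ncard_pos hS).mpr hS₀
  rw [div_eq_one_iff_eq hpos.ne', Nat.cast_inj]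
  exact ⟨fun h => Set.eq_of_subset_of_ncard_le hTS h.ge hS, fun h => h ▸ rfl⟩

theorem List.setOf_length_eq_nonempty (α : Type*) [Nonempty α] (ℓ : ℕ) :
    {w : List α | w.length = ℓ}.Nonempty :=
  ⟨List.replicate ℓ (Classical.arbitrary α), List.length_replicate⟩

theorem Detecting.not_union_singleton_iff {α : Type*} {R : List α → List α → Prop}
    {C : Set (List α)} (hdet : Detecting R C) {w : List α} (hw : w ∉ C) :
    ¬ Detecting R (C ∪ {w}) ↔ ∃ u ∈ C, R u w ∨ R w u := by
  constructor
  · intro hnot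
    by_contra! hfar
    refine hnot ?_
    rintro u (hu | rfl) v (hv | rfl) hR
    · exact hdet u hu v hv hR
    · exact absurd hR (hfar u hu).1
    · exact absurd hR (hfar v hv).2
    · rfl
  · rintro ⟨u, hu, hR⟩ hdet'
    have hne : u ≠ w := fun h => hw (h ▸ hu)
    rcases hR with hR | hR
    · exact hne (hdet' u (Or.inl hu) w (Or.inr rfl) hR)
    · exact hne (hdet' w (Or.inr rfl) u (Or.inl hu) hR).symm

theorem maximality_index_eq_one_iff_general {α : Type*} [Fintype α] [Nonempty α]
    (R : List α → List α → Prop) (ℓ : ℕ) (C : Set (List α))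
    (hIP : ∀ x : List α, R x x)
    (hdet : Detecting R C) :
    (({w : List α | w.length = ℓ} ∩ {y : List α | ∃ u ∈ C, R u y ∨ R y u}).ncard : ℝ) /
      ({w : List α | w.length = ℓ}.ncard : ℝ) = 1
    ↔ (∀ w : List α, w.length = ℓ → w ∉ C → ¬ Detecting R (C ∪ {w})) := by
  rw [Set.ncard_div_ncard_eq_one_iff (List.finite_length_eq α ℓ)
    (List.setOf_length_eq_nonempty α ℓ) Set.inter_subset_left, Set.inter_eq_left]
  refine forall_congr' fun w => imp_congr_right fun _ => ?_
  by_cases hw : w ∈ C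
  · exact iff_of_true ⟨w, hw, Or.inl (hIP w)⟩ (absurd hw)
  · rw [hdet.not_union_singleton_iff hw]
    exact ⟨fun h _ => h, fun h => h hw⟩

/-- For a finite nonempty alphabet, an input-preserving channel `R`, and an
`R`-detecting block code `C ⊆ Σ^ℓ`, the maximality index
`μ(C) = |Σ^ℓ ∩ (R ∪ R⁻¹)(C)| / |Σ^ℓ|` equals `1` iff `C` is maximal `R`-detecting. -/
theorem maximality_index_eq_one_iff {α : Type*} [Fintype α] [Nonempty α]
    (R : List α → List α → Prop) (ℓ : ℕ) (C : Set (List α))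
    (hIP : ∀ x : List α, R x x)
    (hC : C ⊆ {w : List α | w.length = ℓ}) (hdet : Detecting R C) :
    (({w : List α | w.length = ℓ} ∩ {y : List α | ∃ u ∈ C, R u y ∨ R y u}).ncard : ℝ) /
      ({w : List α | w.length = ℓ}.ncard : ℝ) = 1
    ↔ (∀ w : List α, w.length = ℓ → w ∉ C → ¬ Detecting R (C ∪ {w})) :=
  maximality_index_eq_one_iff_general R ℓ C hIP hdet
end

section
/- Define the overlap channel ov by: (x,y) ∈ ov iff there exist words u, z, v with z nonempty such that x = u·z and y = z·v. Let C ⊆ Σ^ℓ be a block code (ℓ ≥ 1) such that every codeword is overlap-free. Then C is ov-detecting if and only if no nonempty proper prefix (length strictly less than ℓ) of a codeword of C is a suffix of a codeword of C. -/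
/-- The overlap channel: `(x,y) ∈ ov` iff `x = u·z` and `y = z·v` for some nonempty `z`. -/
def Ov {α : Type*} (x y : List α) : Prop :=
  ∃ u z v : List α, z ≠ [] ∧ x = u ++ z ∧ y = z ++ v

/-- `w` is overlap-free: no nonempty proper prefix of `w` is also a suffix of `w`. -/
def OverlapFree {α : Type*} (w : List α) : Prop :=
  ∀ z : List α, z ≠ [] → z.length < w.length → z <+: w → ¬ z <:+ w

section

variable {α : Type*}

theorem ov_iff_exists_suffix_prefix {x y : List α} :
    Ov x y ↔ ∃ z : List α, z ≠ [] ∧ z <:+ x ∧ z <+: y := by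
  constructor
  · rintro ⟨u, z, v, hz, rfl, rfl⟩
    exact ⟨z, hz, List.suffix_append u z, List.prefix_append z v⟩
  · rintro ⟨z, hz, ⟨u, rfl⟩, ⟨v, rfl⟩⟩
    exact ⟨u, z, v, hz, rfl, rfl⟩

theorem eq_of_suffix_of_prefix_of_length_eq {x y z : List α} (hzx : z <:+ x) (hzy : z <+: y)
    (hx : z.length = x.length) (hy : z.length = y.length) : x = y :=
  (hzx.eq_of_length hx).symm.trans (hzy.eq_of_length hy)

end

theorem ov_detecting_iff_solid_general {α : Type*} {ℓ : ℕ}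
    (C : Set (List α)) (hC : C ⊆ {w : List α | w.length = ℓ})
    (hof : ∀ w ∈ C, OverlapFree w) :
    Detecting Ov C ↔
      ∀ z : List α, z ≠ [] → z.length < ℓ →
        ∀ w ∈ C, z <+: w → ∀ u ∈ C, ¬ z <:+ u := by
  constructor
  · intro hdet z hz hzℓ w hw hzw u hu hzu
    have huw : u = w := hdet u hu w hw (ov_iff_exists_suffix_prefix.2 ⟨z, hz, hzu, hzw⟩)
    exact hof w hw z hz (by rwa [hC hw]) hzw (huw ▸ hzu)
  · intro hsolid u hu w hw hov
    obtain ⟨z, hz, hzu, hzw⟩ := ov_iff_exists_suffix_prefix.1 hov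
    have hzℓ : z.length ≤ ℓ := hC hw ▸ hzw.length_le
    rcases hzℓ.lt_or_eq with hlt | heq
    · exact absurd hzu (hsolid z hz hlt w hw hzw u hu)
    · exact eq_of_suffix_of_prefix_of_length_eq hzu hzw (heq.trans (hC hu).symm)
        (heq.trans (hC hw).symm)

/-- For a block code `C ⊆ Σ^ℓ` of overlap-free words, `C` is `ov`-detecting iff
no nonempty proper prefix of a codeword is a suffix of a codeword. -/
theorem ov_detecting_iff_solid {α : Type*} {ℓ : ℕ} (hℓ : 1 ≤ ℓ)
    (C : Set (List α)) (hC : C ⊆ {w : List α | w.length = ℓ})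
    (hof : ∀ w ∈ C, OverlapFree w) :
    Detecting Ov C ↔
      ∀ z : List α, z ≠ [] → z.length < ℓ →
        ∀ w ∈ C, z <+: w → ∀ u ∈ C, ¬ z <:+ u :=
  ov_detecting_iff_solid_general C hC hof
end
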